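/- arXiv:2503.21951 — 8 statements merged into one kernel-verified Lean document; each statement's English description precedes it below -/
import Mathlib

section
/- Let d and n be natural numbers and let f be a multivariate polynomial over 𝔽₂ in n variables with total degree at most d. Then for every point v ∈ 𝔽₂ⁿ and every choice of vectors y₁, …, y_{d+1} ∈ 𝔽₂ⁿ, the sum over all nonempty subsets S ⊆ {1, …, d+1} of the evaluations f(v + ∑_{i∈S} yᵢ) equals f(v) (all arithmetic in 𝔽₂). -/
/-! The sum over all `S ⊆ {1, …, d+1}` of `± f(v + ∑_{i∈S} yᵢ)` is a `(d+1)`-fold mixed finite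
difference of `f`. Substituting `x = v + ∑ tᵢ yᵢ` turns `f` into a polynomial of degree `≤ d` in
`t₁, …, t_{d+1}`, evaluated at the `0/1` indicator vectors of the sets `S`. Each monomial of
degree `≤ d` misses some variable `tᵢ`, so adding or removing `i` from `S` does not change its
value but flips the sign: the alternating sum vanishes. Over `𝔽₂` the signs disappear, and the
empty set contributes `f(v)`. -/

open Finset

theorem Finset.sum_powerset_neg_one_pow_card_mul_eq_zero {ι R : Type*} [DecidableEq ι] [Ring R]
    {s : Finset ι} {i : ι} (hi : i ∈ s) (F : Finset ι → R)
    (hF : ∀ t, i ∉ t → F (insert i t) = F t) :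
    ∑ t ∈ s.powerset, (-1) ^ #t * F t = 0 := by
  rw [← insert_erase hi, sum_powerset_insert (notMem_erase i s), ← sum_add_distrib]
  refine sum_eq_zero fun t ht => ?_
  have hit : i ∉ t := fun h => notMem_erase i s (mem_powerset.mp ht h)
  rw [card_insert_of_notMem hit, hF t hit, pow_succ, mul_neg_one, neg_mul, add_neg_cancel]

namespace MvPolynomial

variable {R σ τ ι : Type*} [CommRing R]

theorem card_support_le_totalDegree {P : MvPolynomial σ R} {m : σ →₀ ℕ} (hm : m ∈ P.support) :
    #m.support ≤ P.totalDegree := by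
  classical
  calc #m.support = #(Finsupp.toMultiset m).toFinset := by rw [Finsupp.toFinset_toMultiset]
    _ ≤ Multiset.card (Finsupp.toMultiset m) := Multiset.toFinset_card_le _
    _ ≤ P.totalDegree := by rw [Finsupp.card_toMultiset]; exact le_totalDegree hm

theorem totalDegree_bind₁_le_mul (f : MvPolynomial σ R) (g : σ → MvPolynomial τ R) {k : ℕ}
    (hg : ∀ j, (g j).totalDegree ≤ k) :
    (bind₁ g f).totalDegree ≤ f.totalDegree * k := by
  nth_rw 1 [f.as_sum]
  rw [map_sum]
  refine totalDegree_finsetSum_le fun m hm => ?_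
  rw [bind₁_monomial]
  calc (C (coeff m f) * ∏ j ∈ m.support, g j ^ m j).totalDegree
      ≤ (C (coeff m f)).totalDegree + ∑ j ∈ m.support, (g j ^ m j).totalDegree :=
        (totalDegree_mul _ _).trans (by gcongr; exact totalDegree_finsetProd _ _)
    _ ≤ 0 + ∑ j ∈ m.support, m j * k := by
        rw [totalDegree_C]
        gcongr with j
        exact (totalDegree_pow _ _).trans (Nat.mul_le_mul_left _ (hg j))
    _ = (m.sum fun _ e => e) * k := by rw [zero_add, Finsupp.sum, Finset.sum_mul]
    _ ≤ f.totalDegree * k := Nat.mul_le_mul_right _ (le_totalDegree hm)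

theorem sum_neg_one_pow_card_mul_eval_indicator_eq_zero [Fintype ι] [DecidableEq ι]
    {P : MvPolynomial ι R} (hP : P.totalDegree < Fintype.card ι) :
    ∑ S : Finset ι, (-1) ^ #S * eval (fun i => if i ∈ S then 1 else 0) P = 0 := by
  nth_rw 1 [P.as_sum]
  simp_rw [map_sum, mul_sum]
  rw [sum_comm]
  refine sum_eq_zero fun m hm => ?_
  obtain ⟨i, -, hi⟩ : ∃ i ∈ univ, i ∉ m.support :=
    exists_mem_notMem_of_card_lt_card ((card_support_le_totalDegree hm).trans_lt hP)
  rw [← powerset_univ]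
  refine sum_powerset_neg_one_pow_card_mul_eq_zero (mem_univ i) _ fun t _ => ?_
  simp only [eval_monomial]
  congr 1
  refine Finsupp.prod_congr fun j hj => ?_
  simp only [mem_insert, ne_of_mem_of_not_mem hj hi, false_or]

theorem sum_neg_one_pow_card_mul_eval_add_sum_eq_zero [Fintype ι] {f : MvPolynomial σ R}
    (hf : f.totalDegree < Fintype.card ι) (v : σ → R) (y : ι → σ → R) :
    ∑ S : Finset ι, (-1) ^ #S * eval (v + ∑ i ∈ S, y i) f = 0 := by
  classical
  set g : σ → MvPolynomial ι R := fun j => C (v j) + ∑ i, C (y i j) * X i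
  have hg : ∀ j, (g j).totalDegree ≤ 1 := fun j =>
    (totalDegree_add _ _).trans <| max_le (by rw [totalDegree_C]; exact zero_le_one) <|
      totalDegree_finsetSum_le fun i _ =>
        C_mul_X_eq_monomial (R := R) ▸ (totalDegree_monomial_le _ _).trans (by simp)
  have heval : ∀ S : Finset ι,
      eval (fun i => if i ∈ S then 1 else 0) (bind₁ g f) = eval (v + ∑ i ∈ S, y i) f := by
    intro S
    rw [show eval _ (bind₁ g f) = eval _ f from eval₂Hom_bind₁ _ _ _ _]
    refine congrArg (eval · f) ?_
    funext j
    simp [g]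
  simp_rw [← heval]
  exact sum_neg_one_pow_card_mul_eval_indicator_eq_zero
    ((totalDegree_bind₁_le_mul f g hg).trans_lt (by rwa [mul_one]))

end MvPolynomial

/-- For a multivariate polynomial `f` over `𝔽₂` in `n` variables with total
degree at most `d`, for every point `v` and vectors `y₁, …, y_{d+1}`, the sum over all
nonempty subsets `S ⊆ {1, …, d+1}` of `f(v + ∑_{i∈S} yᵢ)` equals `f(v)`. -/
theorem parity_subset_sum_identity (d n : ℕ) (f : MvPolynomial (Fin n) (ZMod 2))
    (hdeg : f.totalDegree ≤ d)
    (v : Fin n → ZMod 2) (y : Fin (d + 1) → Fin n → ZMod 2) :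
    ∑ S ∈ (Finset.univ : Finset (Fin (d + 1))).powerset.filter (fun S => S.Nonempty),
        MvPolynomial.eval (v + ∑ i ∈ S, y i) f
      = MvPolynomial.eval v f := by
  have hall : ∑ S ∈ univ.powerset, MvPolynomial.eval (v + ∑ i ∈ S, y i) f = 0 := by
    simpa [CharTwo.neg_eq] using
      MvPolynomial.sum_neg_one_pow_card_mul_eval_add_sum_eq_zero (ι := Fin (d + 1))
        (hdeg.trans_lt (by simp)) v y
  rw [← add_sum_erase _ _ (empty_mem_powerset _), sum_empty, add_zero,
    CharTwo.add_eq_zero] at hall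
  have hnonempty : univ.powerset.filter (fun S : Finset (Fin (d + 1)) => S.Nonempty)
      = univ.powerset.erase ∅ := by
    ext S
    simp [nonempty_iff_ne_empty, and_comm]
  rw [hnonempty, hall]
end

section
/- Let d and n be natural numbers and let f be a multivariate polynomial over 𝔽₂ in n variables with total degree at most d. Then for every v ∈ 𝔽₂ⁿ and every y₁, …, y_{d+1} ∈ 𝔽₂ⁿ, the sum over ALL subsets S ⊆ {1, …, d+1} (including the empty set) of f(v + ∑_{i∈S} yᵢ) equals 0 in 𝔽₂. -/
/-!
Substituting `x ↦ v + ∑ i, x i • y i` turns `f` into a polynomial in `d + 1` variables of degree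
`≤ d < (2 - 1) * (d + 1)`, so by the summation lemma behind Chevalley–Warning its values over all
of `𝔽₂^(d+1)` sum to zero. Over `𝔽₂` these points are exactly the `v + ∑ i ∈ S, y i`.
-/

open MvPolynomial Finset

namespace MvPolynomial

variable {R σ τ : Type*} [CommSemiring R]

theorem totalDegree_aeval_le_mul (g : σ → MvPolynomial τ R) {k : ℕ}
    (hg : ∀ j, (g j).totalDegree ≤ k) (f : MvPolynomial σ R) :
    (aeval g f).totalDegree ≤ k * f.totalDegree := by
  conv_lhs => rw [f.as_sum, map_sum]
  refine (totalDegree_finsetSum _ _).trans (Finset.sup_le fun s hs => ?_)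
  rw [aeval_monomial, algebraMap_eq]
  refine (totalDegree_mul _ _).trans ?_
  rw [totalDegree_C, zero_add, Finsupp.prod]
  refine (totalDegree_finsetProd _ _).trans ?_
  calc ∑ j ∈ s.support, (g j ^ s j).totalDegree
      ≤ ∑ j ∈ s.support, k * s j :=
        sum_le_sum fun j _ => (totalDegree_pow _ _).trans (by rw [mul_comm]; gcongr; exact hg j)
    _ = k * s.sum fun _ e => e := by rw [Finsupp.sum, mul_sum]
    _ ≤ k * f.totalDegree := Nat.mul_le_mul_left _ (le_totalDegree hs)

variable [Fintype τ]

/-- `x ↦ f (v + ∑ i, x i • y i)` as a polynomial in `x`. -/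
noncomputable def restrictAffine (f : MvPolynomial σ R) (v : σ → R) (y : τ → σ → R) :
    MvPolynomial τ R :=
  bind₁ (fun j => C (v j) + ∑ i, monomial (Finsupp.single i 1) (y i j)) f

theorem totalDegree_restrictAffine_le (f : MvPolynomial σ R) (v : σ → R) (y : τ → σ → R) :
    (restrictAffine f v y).totalDegree ≤ f.totalDegree := by
  refine (totalDegree_aeval_le_mul _ (fun j => ?_) f).trans_eq (one_mul _)
  refine (totalDegree_add _ _).trans (max_le (by rw [totalDegree_C]; exact zero_le_one) ?_)
  refine (totalDegree_finsetSum _ _).trans (Finset.sup_le fun i _ => ?_)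
  exact (totalDegree_monomial_le _ _).trans_eq (Finsupp.sum_single_index rfl)

theorem eval_restrictAffine (f : MvPolynomial σ R) (v : σ → R) (y : τ → σ → R) (x : τ → R) :
    eval x (restrictAffine f v y) = eval (v + ∑ i, x i • y i) f := by
  rw [restrictAffine, ← aeval_eq_eval, ← aeval_eq_eval, aeval_bind₁]
  congr 1
  ext j
  simp [eval_monomial, mul_comm]

theorem sum_eval_affine_eq_zero {K : Type*} [Field K] [Fintype K] [DecidableEq τ]
    (f : MvPolynomial σ K) (v : σ → K) (y : τ → σ → K)
    (hf : f.totalDegree < (Fintype.card K - 1) * Fintype.card τ) :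
    ∑ x : τ → K, eval (v + ∑ i, x i • y i) f = 0 := by
  simp_rw [← eval_restrictAffine]
  exact sum_eval_eq_zero _ ((totalDegree_restrictAffine_le f v y).trans_lt hf)

end MvPolynomial

theorem Finset.sum_powerset_univ_indicator_eq_sum {ι M : Type*} [Fintype ι] [DecidableEq ι]
    [AddCommMonoid M] (F : (ι → ZMod 2) → M) :
    ∑ S ∈ (univ : Finset ι).powerset, F (fun i => if i ∈ S then 1 else 0) = ∑ x, F x := by
  rw [powerset_univ]
  refine Fintype.sum_bijective (fun (S : Finset ι) i => if i ∈ S then (1 : ZMod 2) else 0)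
    ⟨fun S T h => ?_, fun x => ⟨univ.filter fun i => x i = 1, ?_⟩⟩ _ _ fun _ => rfl
  · ext i
    have := congrFun h i
    by_cases hS : i ∈ S <;> by_cases hT : i ∈ T <;> simp_all
  · ext i
    obtain h | h : x i = 0 ∨ x i = 1 := by generalize x i = a; decide +revert
    all_goals simp [h]

/-- For a multivariate polynomial `f` over `𝔽₂` in `n` variables with total
degree at most `d`, the sum over ALL subsets `S ⊆ {1, …, d+1}` (including `∅`) of
`f(v + ∑_{i∈S} yᵢ)` equals `0` in `𝔽₂`. -/
theorem parity_full_difference_vanishes (d n : ℕ) (f : MvPolynomial (Fin n) (ZMod 2))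
    (hdeg : f.totalDegree ≤ d)
    (v : Fin n → ZMod 2) (y : Fin (d + 1) → Fin n → ZMod 2) :
    ∑ S ∈ (Finset.univ : Finset (Fin (d + 1))).powerset,
        MvPolynomial.eval (v + ∑ i ∈ S, y i) f
      = 0 := by
  have sum_subset_eq : ∀ S : Finset (Fin (d + 1)),
      ∑ i ∈ S, y i = ∑ i, (if i ∈ S then (1 : ZMod 2) else 0) • y i := fun S => by
    simp only [ite_smul, one_smul, zero_smul, sum_ite_mem, univ_inter]
  simp_rw [sum_subset_eq]
  rw [sum_powerset_univ_indicator_eq_sum (fun x => eval (v + ∑ i, x i • y i) f)]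
  exact sum_eval_affine_eq_zero f v y (by simpa [ZMod.card] using Nat.lt_succ_of_le hdeg)
end

section
/- For any monomial m = ∏_{i∈L} x_i over 𝔽₂ in n variables with 1 ≤ |L| ≤ d, and any vectors y₁, …, y_{d+1} ∈ 𝔽₂ⁿ, the sum over all nonempty subsets S ⊆ {1, …, d+1} of m(∑_{i∈S} yᵢ) equals 0 in 𝔽₂. -/
/-!
Expanding `∏_{i ∈ L} ∑_{j ∈ S} y j i` turns the sum over `S` into a sum over maps `p : L → Fin (d + 1)`
of `∏_i y (p i) i`, counted once for each `S` containing the image of `p`. That image has at most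
`|L| ≤ d` elements, so it misses some index and the number of such `S` is a positive power of two,
which vanishes in `𝔽₂`. The empty `S` contributes nothing because `L` is nonempty.
-/

open Finset

theorem Finset.even_card_filter_superset {ι : Type*} [Fintype ι] [DecidableEq ι]
    {A : Finset ι} (hA : #A < Fintype.card ι) :
    Even #{S : Finset ι | A ⊆ S} := by
  have hIcc : ({S : Finset ι | A ⊆ S} : Finset (Finset ι)) = Icc A univ := by
    ext S; simp
  rw [hIcc, card_Icc_finset (subset_univ A), card_univ]
  exact (Nat.even_pow' (by omega)).mpr even_two

theorem CharTwo.sum_finset_prod_sum_eq_zero {ι σ R : Type*} [Fintype ι] [Fintype σ]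
    [CommSemiring R] [CharP R 2] (y : ι → σ → R)
    (h : Fintype.card σ < Fintype.card ι) :
    ∑ S : Finset ι, ∏ i, ∑ j ∈ S, y j i = 0 := by
  classical
  have expand : ∀ S : Finset ι, ∏ i, ∑ j ∈ S, y j i
      = ∑ p : σ → ι, if univ.image p ⊆ S then ∏ i, y (p i) i else 0 := by
    intro S
    rw [prod_univ_sum, ← sum_filter]
    congr 1
    ext p
    simp [image_subset_iff]
  simp_rw [expand]
  rw [sum_comm]
  refine sum_eq_zero fun p _ => ?_
  rw [← sum_filter, sum_const]
  have hcard : #(univ.image p) < Fintype.card ι :=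
    (card_image_le.trans_eq card_univ).trans_lt h
  obtain ⟨k, hk⟩ := even_card_filter_superset hcard
  rw [hk, add_smul, CharTwo.add_self_eq_zero]

/-- For a monomial `m = ∏_{i∈L} x_i` over `𝔽₂` with `1 ≤ |L| ≤ d`, and any
vectors `y₁, …, y_{d+1} ∈ 𝔽₂ⁿ`, the sum over all nonempty subsets `S ⊆ {1, …, d+1}` of
`m(∑_{i∈S} yᵢ)` equals `0` in `𝔽₂`. -/
theorem monomial_subset_sum_vanishes (n d : ℕ) (L : Finset (Fin n))
    (h1 : 1 ≤ L.card) (h2 : L.card ≤ d)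
    (y : Fin (d + 1) → Fin n → ZMod 2) :
    ∑ S ∈ (Finset.univ : Finset (Fin (d + 1))).powerset.filter (fun S => S.Nonempty),
        ∏ i ∈ L, (∑ j ∈ S, y j) i
      = 0 := by
  obtain ⟨a, ha⟩ := card_pos.mp h1
  have empty_term : ∀ S ∈ (univ : Finset (Fin (d + 1))).powerset,
      ∏ i ∈ L, (∑ j ∈ S, y j) i ≠ 0 → S.Nonempty := by
    intro S _ hS
    rw [nonempty_iff_ne_empty]
    rintro rfl
    exact hS (prod_eq_zero ha rfl)
  rw [sum_filter_of_ne empty_term, powerset_univ]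
  simp_rw [Finset.sum_apply, ← prod_coe_sort L]
  exact CharTwo.sum_finset_prod_sum_eq_zero (fun j (i : L) => y j i)
    (by simpa using h2.trans_lt d.lt_succ_self)
end

section
/- Let d, n be natural numbers, let f be a multivariate polynomial over 𝔽₂ in n variables with total degree at most d, and let g : 𝔽₂ⁿ → 𝔽₂ be any function such that 2^{d+3} · |{x ∈ 𝔽₂ⁿ : g(x) ≠ f(x)}| ≤ 2ⁿ (i.e., g agrees with f on at least a 1 − 1/2^{d+3} fraction of inputs). Then for every v ∈ 𝔽₂ⁿ, the number of tuples (y₁, …, y_{d+1}) ∈ (𝔽₂ⁿ)^{d+1} for which ∑_{∅≠S⊆{1,…,d+1}} g(v + ∑_{i∈S} yᵢ) ≠ f(v) is at most 2^{n(d+1)}/4. In other words, for uniformly random y₁, …, y_{d+1}, the corrected value ∑_{∅≠S} g(v + ∑_{i∈S} yᵢ) equals f(v) with probability at least 3/4. -/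
/-!
A polynomial of total degree `< k` is killed by every `k`-fold finite difference:
`∑_{S ⊆ K} (-1)^|S| f(v + ∑_{i ∈ S} yᵢ) = 0` whenever `|K| = k`. After expanding a monomial,
each term involves fewer than `k` of the `yᵢ`, so the alternating sum over the remaining
indices cancels it. Over `𝔽₂` the signs disappear and the sum over nonempty `S` recovers
`f(v)`, so the corrected value can only be wrong if `g ≠ f` at one of the `2^{d+1} - 1` query
points. Each query point with `S ≠ ∅` is uniformly distributed, hence lies in the
disagreement set with probability at most `2^{-(d+3)}`, and a union bound gives `1/4`.
-/

open Finset

section FiniteDifference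

variable {R σ ι : Type*} [CommRing R] [DecidableEq ι]

theorem Finset.sum_powerset_neg_one_pow_card_mul_prod_add_sum_eq_zero {α : Type*} [DecidableEq α]
    (a : α → R) (b : ι → α → R) (K : Finset ι) (T : Finset α) (hTK : #T < #K) :
    ∑ S ∈ K.powerset, (-1) ^ #S * ∏ t ∈ T, (a t + ∑ i ∈ S, b i t) = 0 := by
  induction K using Finset.induction_on generalizing T with
  | empty => simp at hTK
  | insert i K hi ih =>
    rw [card_insert_of_notMem hi] at hTK
    -- adding `i` to `S` shifts each factor by `b i t`; in the expansion the `U = ∅` term cancels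
    -- the sum over `S ⊆ K`, and every other term has too few factors for `K` by induction
    have hinsert : ∀ S ∈ K.powerset,
        (-1) ^ #(insert i S) * ∏ t ∈ T, (a t + ∑ j ∈ insert i S, b j t) =
          -∑ U ∈ T.powerset, (∏ t ∈ U, b i t) *
            ((-1) ^ #S * ∏ t ∈ T \ U, (a t + ∑ j ∈ S, b j t)) := by
      intro S hS
      have hiS : i ∉ S := fun h => hi (mem_powerset.mp hS h)
      have hexpand : ∏ t ∈ T, (a t + ∑ j ∈ insert i S, b j t) =
          ∑ U ∈ T.powerset, (∏ t ∈ U, b i t) * ∏ t ∈ T \ U, (a t + ∑ j ∈ S, b j t) := by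
        rw [← prod_add]
        exact prod_congr rfl fun t _ => by rw [sum_insert hiS]; ring
      rw [hexpand, card_insert_of_notMem hiS, mul_sum, ← sum_neg_distrib]
      exact sum_congr rfl fun _ _ => by ring
    have hvanish : ∀ U ∈ T.powerset, U ≠ ∅ →
        ∑ S ∈ K.powerset, (∏ t ∈ U, b i t) *
          ((-1) ^ #S * ∏ t ∈ T \ U, (a t + ∑ j ∈ S, b j t)) = 0 := by
      intro U hU hU0
      have hUT := mem_powerset.mp hU
      have hU1 := card_pos.mpr (nonempty_iff_ne_empty.mpr hU0)
      have hUle := card_le_card hUT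
      rw [← mul_sum, ih _ (by rw [card_sdiff_of_subset hUT]; omega), mul_zero]
    rw [sum_powerset_insert hi, sum_congr rfl hinsert, sum_neg_distrib, sum_comm,
      sum_eq_single ∅ hvanish (by simp)]
    simp

theorem MvPolynomial.sum_powerset_neg_one_pow_card_mul_eval_add_sum_eq_zero
    (f : MvPolynomial σ R) {K : Finset ι} (hK : f.totalDegree < #K) (v : σ → R)
    (y : ι → σ → R) :
    ∑ S ∈ K.powerset, (-1) ^ #S * eval (v + ∑ i ∈ S, y i) f = 0 := by
  classical
  -- each monomial `x ^ e` is a product of `|e|` coordinates, indexed by `(j, k)` with `k < e j`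
  have hmonomial : ∀ (e : σ →₀ ℕ) (x : σ → R),
      ∏ j ∈ e.support, x j ^ e j = ∏ p ∈ e.support.sigma fun j => range (e j), x p.1 := by
    intro e x
    simp [prod_sigma]
  simp_rw [eval_eq, hmonomial, mul_sum, sum_comm (s := K.powerset), mul_left_comm _ (coeff _ f)]
  refine sum_eq_zero fun e he => ?_
  rw [← mul_sum]
  have hcard : #(e.support.sigma fun j => range (e j)) < #K := by
    simpa [card_sigma, Finsupp.sum] using (le_totalDegree he).trans_lt hK
  simpa using mul_eq_zero_of_right _ <|
    sum_powerset_neg_one_pow_card_mul_prod_add_sum_eq_zero (fun p => v p.1)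
      (fun i p => y i p.1) K _ hcard

theorem MvPolynomial.sum_nonempty_eval_add_sum_eq_eval [CharP R 2] (f : MvPolynomial σ R) {K : Finset ι}
    (hK : f.totalDegree < #K) (v : σ → R) (y : ι → σ → R) :
    ∑ S ∈ K.powerset.filter (fun S => S.Nonempty), eval (v + ∑ i ∈ S, y i) f = eval v f := by
  have h := sum_powerset_neg_one_pow_card_mul_eval_add_sum_eq_zero f hK v y
  have hempty : K.powerset.filter (fun S => ¬S.Nonempty) = {∅} := by
    ext S
    simp only [mem_filter, mem_powerset, not_nonempty_iff_eq_empty, mem_singleton]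
    exact ⟨And.right, fun h => ⟨h ▸ empty_subset K, h⟩⟩
  rw [← sum_filter_add_sum_filter_not _ (fun S => S.Nonempty), hempty] at h
  simpa [CharTwo.neg_eq, ← CharTwo.sub_eq_add, sub_eq_zero] using h

end FiniteDifference

theorem AddMonoidHom.card_filter_add_mem_mul_card {A G : Type*} [AddGroup A] [Fintype A]
    [AddGroup G] [Fintype G] [DecidableEq G] {L : A →+ G} (hL : Function.Surjective L)
    (c : G) (B : Finset G) :
    #{a | c + L a ∈ B} * Fintype.card G = #B * Fintype.card A := by
  have hfiber : ∀ g, #{a | L a = g} = #{a | L a = 0} := fun g =>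
    card_fiber_eq_of_mem_range L (hL g) (hL 0)
  have hA : Fintype.card A = Fintype.card G * #{a | L a = 0} := by
    rw [← card_univ, card_eq_sum_card_fiberwise (f := L) (t := univ) (by simp),
      sum_congr rfl fun g _ => hfiber g, sum_const, card_univ, smul_eq_mul]
  have hB : #{a | c + L a ∈ B} = #B * #{a | L a = 0} := by
    rw [← sum_card_fiberwise_eq_card_filter, ← sum_const_nat fun b _ => hfiber (-c + b)]
    refine sum_congr rfl fun b _ => congrArg card (filter_congr fun a _ => ?_)
    rw [eq_neg_add_iff_add_eq]
  rw [hA, hB]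
  ring

theorem card_filter_add_sum_mem_mul_card {G ι : Type*} [AddCommGroup G] [Fintype G]
    [DecidableEq G] [Fintype ι] [DecidableEq ι] {S : Finset ι} (hS : S.Nonempty) (c : G)
    (B : Finset G) :
    #{y : ι → G | c + ∑ i ∈ S, y i ∈ B} * Fintype.card G =
      #B * Fintype.card G ^ Fintype.card ι := by
  obtain ⟨i₀, hi₀⟩ := hS
  let L : (ι → G) →+ G := ∑ i ∈ S, Pi.evalAddMonoidHom (fun _ => G) i
  have hL : Function.Surjective L := fun g => ⟨Pi.single i₀ g, by simp [L, hi₀]⟩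
  simpa [L, Fintype.card_fun] using L.card_filter_add_mem_mul_card hL c B

/-- Self-correction for parity problems expressible by degree-`d` polynomials
over `𝔽₂`: if `g` agrees with `f` on at least a `1 − 1/2^{d+3}` fraction of inputs, then for
every `v`, the number of tuples `(y₁, …, y_{d+1})` for which
`∑_{∅≠S⊆{1,…,d+1}} g(v + ∑_{i∈S} yᵢ) ≠ f(v)` is at most `2^{n(d+1)}/4`. -/
theorem parity_self_correction (d n : ℕ) (f : MvPolynomial (Fin n) (ZMod 2))
    (hdeg : f.totalDegree ≤ d)
    (g : (Fin n → ZMod 2) → ZMod 2)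
    (hg : 2 ^ (d + 3) *
        (Finset.univ.filter
          (fun x : Fin n → ZMod 2 => g x ≠ MvPolynomial.eval x f)).card
        ≤ 2 ^ n)
    (v : Fin n → ZMod 2) :
    4 * (Finset.univ.filter
        (fun y : Fin (d + 1) → Fin n → ZMod 2 =>
          (∑ S ∈ (Finset.univ : Finset (Fin (d + 1))).powerset.filter
              (fun S => S.Nonempty),
            g (v + ∑ i ∈ S, y i)) ≠ MvPolynomial.eval v f)).card
      ≤ 2 ^ (n * (d + 1)) := by
  set B := univ.filter fun x : Fin n → ZMod 2 => g x ≠ MvPolynomial.eval x f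
  set queries := (univ : Finset (Fin (d + 1))).powerset.filter fun S => S.Nonempty
  set hits := fun S : Finset (Fin (d + 1)) =>
    univ.filter fun y : Fin (d + 1) → Fin n → ZMod 2 => v + ∑ i ∈ S, y i ∈ B
  have hcover : univ.filter (fun y : Fin (d + 1) → Fin n → ZMod 2 =>
      ∑ S ∈ queries, g (v + ∑ i ∈ S, y i) ≠ MvPolynomial.eval v f) ⊆ queries.biUnion hits := by
    intro y hy
    contrapose! hy
    simp only [hits, mem_biUnion, mem_filter, mem_univ, true_and, B, not_exists, not_and,
      not_not] at hy ⊢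
    rw [sum_congr rfl hy]
    exact MvPolynomial.sum_nonempty_eval_add_sum_eq_eval f (by simpa using hdeg) v y
  have hqueries : #queries ≤ 2 ^ (d + 1) := (card_filter_le _ _).trans (by simp)
  have hhits : ∀ S ∈ queries, #(hits S) * 2 ^ n = #B * 2 ^ (n * (d + 1)) := fun S hS => by
    simpa [hits, pow_mul] using card_filter_add_sum_mem_mul_card (mem_filter.mp hS).2 v B
  refine Nat.le_of_mul_le_mul_right ?_ (by positivity : 0 < 2 ^ n)
  calc 4 * #_ * 2 ^ n
      ≤ 4 * (∑ S ∈ queries, #(hits S)) * 2 ^ n := by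
        gcongr
        exact (card_le_card hcover).trans card_biUnion_le
    _ = 4 * (#queries * (#B * 2 ^ (n * (d + 1)))) := by
        rw [mul_assoc, sum_mul, sum_congr rfl hhits, sum_const, smul_eq_mul]
    _ ≤ 4 * (2 ^ (d + 1) * (#B * 2 ^ (n * (d + 1)))) := by gcongr
    _ = 2 ^ (d + 3) * #B * 2 ^ (n * (d + 1)) := by ring
    _ ≤ 2 ^ (n * (d + 1)) * 2 ^ n := by rw [mul_comm (2 ^ (n * (d + 1)))]; gcongr
end

section
/- Let f be a polynomial over ℤ in n variables that is d-partite with respect to a map part : {1,…,n} → {1,…,d}, let t ≥ 1, and let u ∈ {0, …, 2^t − 1}ⁿ. Then ∑_{(b₁,…,b_d) ∈ {0,…,t−1}^d} 2^{b₁+⋯+b_d} · f( bit_{b_{part(1)}}(u₁), …, bit_{b_{part(n)}}(u_n) ) ≡ ∑_{ℓ=0}^{d} (−1)^{d−ℓ} f_ℓ(u₁, …, u_n) (mod 2^t), where f_ℓ denotes the homogeneous component of f of degree ℓ. -/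
/-- A polynomial `f ∈ ℤ[x₁,…,xₙ]` is `d`-partite with respect to `part : {1,…,n} → {1,…,d}`
if every monomial of `f` is multilinear and no two distinct variables occurring in the same
monomial have the same image under `part`. -/
def IsPartite {n d : ℕ} (part : Fin n → Fin d) (f : MvPolynomial (Fin n) ℤ) : Prop :=
  ∀ m ∈ f.support, (∀ i, m i ≤ 1) ∧ Set.InjOn part {i | i ∈ (m : Fin n →₀ ℕ).support}

/-! Expand `f` into monomials. For a multilinear monomial whose variables lie in distinct parts,
the sum over `b` factors into a product over the parts: a part containing the variable `xᵢ`
contributes `∑_c 2^c bit_c(uᵢ) = uᵢ mod 2^t`, an empty part contributes `∑_c 2^c = 2^t - 1 ≡ -1`.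
So a monomial of degree `ℓ` contributes `(-1)^(d-ℓ)` times its value at `u`, modulo `2^t`. -/

open Finset MvPolynomial

theorem Nat.sum_range_two_pow_mul_testBit (x t : ℕ) :
    ∑ c ∈ range t, 2 ^ c * (x.testBit c).toNat = x % 2 ^ t := by
  induction t with
  | zero => simp [Nat.mod_one]
  | succ t ih => rw [sum_range_succ, ih, Nat.mod_pow_succ, Nat.toNat_testBit]

theorem Finsupp.eq_one_of_mem_support_of_le_one {σ : Type*} {m : σ →₀ ℕ} (hm : ∀ i, m i ≤ 1)
    {i : σ} (hi : i ∈ m.support) : m i = 1 :=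
  le_antisymm (hm i) (Nat.one_le_iff_ne_zero.mpr (Finsupp.mem_support_iff.mp hi))

theorem Finsupp.prod_pow_eq_prod_support_of_le_one {σ M : Type*} [CommMonoid M] {m : σ →₀ ℕ}
    (hm : ∀ i, m i ≤ 1) (x : σ → M) : m.prod (fun i k => x i ^ k) = ∏ i ∈ m.support, x i :=
  Finset.prod_congr rfl fun _ hi => by simp [eq_one_of_mem_support_of_le_one hm hi]

theorem Finsupp.degree_eq_card_support_of_le_one {σ : Type*} {m : σ →₀ ℕ} (hm : ∀ i, m i ≤ 1) :
    m.degree = #m.support := by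
  rw [degree_apply, card_eq_sum_ones]
  exact Finset.sum_congr rfl fun _ hi => eq_one_of_mem_support_of_le_one hm hi

theorem sum_fin_two_pow_mul_testBit (x t : ℕ) :
    ∑ c : Fin t, (2 : ℤ) ^ (c : ℕ) * ((x.testBit c).toNat : ℤ) = (x : ℤ) % 2 ^ t := by
  rw [Fin.sum_univ_eq_sum_range (fun c => (2 : ℤ) ^ c * ((x.testBit c).toNat : ℤ))]
  exact_mod_cast Nat.sum_range_two_pow_mul_testBit x t

theorem sum_fin_two_pow {R : Type*} [Ring R] (t : ℕ) :
    ∑ c : Fin t, (2 : R) ^ (c : ℕ) = 2 ^ t - 1 := by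
  rw [Fin.sum_univ_eq_sum_range (fun c => (2 : R) ^ c)]
  simpa [show (2 : R) - 1 = 1 by rw [← one_add_one_eq_two, add_sub_cancel_right]] using
    geom_sum_mul (2 : R) t

theorem Set.InjOn.filter_eq_singleton {σ ι : Type*} [DecidableEq ι] {part : σ → ι}
    {S : Finset σ} (hS : Set.InjOn part S) {i : σ} (hi : i ∈ S) :
    {k ∈ S | part k = part i} = {i} := by
  ext k
  simp only [mem_filter, Finset.mem_singleton]
  exact ⟨fun ⟨hk, hki⟩ => hS hk hi hki, by rintro rfl; exact ⟨hi, rfl⟩⟩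

theorem sum_two_pow_mul_prod_testBit {σ ι : Type*} [Fintype ι] [DecidableEq ι] (t : ℕ)
    {part : σ → ι} {S : Finset σ} (hS : Set.InjOn part S) (u : σ → ℕ) :
    ∑ b : ι → Fin t,
        (2 : ℤ) ^ (∑ j, (b j : ℕ)) * ∏ i ∈ S, (((u i).testBit (b (part i))).toNat : ℤ)
      = (2 ^ t - 1) ^ (Fintype.card ι - #S) * ∏ i ∈ S, ((u i : ℤ) % 2 ^ t) := by
  set F : ι → Fin t → ℤ := fun j c =>
    2 ^ (c : ℕ) * ∏ i ∈ S with part i = j, (((u i).testBit c).toNat : ℤ)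
  have hsplit : ∀ b : ι → Fin t,
      (2 : ℤ) ^ (∑ j, (b j : ℕ)) * ∏ i ∈ S, (((u i).testBit (b (part i))).toNat : ℤ)
        = ∏ j, F j (b j) := by
    intro b
    rw [prod_mul_distrib, prod_pow_eq_pow_sum, ← prod_fiberwise S part]
    congr 1
    exact prod_congr rfl fun j _ => prod_congr rfl fun i hi => by rw [(mem_filter.mp hi).2]
  have hfiber : ∀ i ∈ S, ∑ c, F (part i) c = (u i : ℤ) % 2 ^ t := fun i hi => by
    simp only [F, hS.filter_eq_singleton hi, prod_singleton]
    exact sum_fin_two_pow_mul_testBit (u i) t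
  have hempty : ∀ j ∉ S.image part, ∑ c, F j c = 2 ^ t - 1 := fun j hj => by
    have : {i ∈ S | part i = j} = ∅ :=
      filter_eq_empty_iff.mpr fun i hi hij => hj (hij ▸ mem_image_of_mem part hi)
    simp only [F, this, prod_empty, mul_one]
    exact sum_fin_two_pow t
  simp_rw [hsplit, ← Fintype.prod_sum, ← prod_mul_prod_compl (S.image part),
    prod_image hS, prod_congr rfl hfiber, prod_congr rfl fun j hj => hempty j (mem_compl.mp hj),
    prod_const, card_compl, card_image_of_injOn hS, mul_comm]

theorem MvPolynomial.sum_range_mul_eval_homogeneousComponent {σ R : Type*} [CommSemiring R]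
    {f : MvPolynomial σ R} {d : ℕ} (hf : f.totalDegree ≤ d) (g : ℕ → R) (x : σ → R) :
    ∑ ℓ ∈ range (d + 1), g ℓ * eval x (homogeneousComponent ℓ f)
      = ∑ m ∈ f.support, g m.degree * eval x (monomial m (f.coeff m)) := by
  have hmaps : ∀ m ∈ f.support, m.degree ∈ range (d + 1) := fun m hm =>
    mem_range_succ_iff.mpr ((le_totalDegree hm).trans hf)
  simp_rw [homogeneousComponent_apply, map_sum, mul_sum]
  rw [← sum_fiberwise_of_maps_to hmaps]
  exact sum_congr rfl fun ℓ _ => sum_congr rfl fun m hm => by rw [(mem_filter.mp hm).2]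

namespace IsPartite

variable {n d : ℕ} {part : Fin n → Fin d} {f : MvPolynomial (Fin n) ℤ}

theorem card_support_le (hf : IsPartite part f) {m : Fin n →₀ ℕ} (hm : m ∈ f.support) :
    #m.support ≤ d := by
  simpa using card_le_card_of_injOn part (fun _ _ => mem_univ _) (hf m hm).2

theorem totalDegree_le (hf : IsPartite part f) : f.totalDegree ≤ d :=
  Finset.sup_le fun m hm =>
    (Finsupp.degree_eq_card_support_of_le_one (hf m hm).1).trans_le (hf.card_support_le hm)

theorem eval_eq (hf : IsPartite part f) (x : Fin n → ℤ) :
    eval x f = ∑ m ∈ f.support, f.coeff m * ∏ i ∈ m.support, x i := by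
  rw [MvPolynomial.eval_eq]
  exact sum_congr rfl fun m hm =>
    congrArg _ (Finsupp.prod_pow_eq_prod_support_of_le_one (hf m hm).1 x)

theorem sum_two_pow_mul_eval_testBit (hf : IsPartite part f) (t : ℕ) (u : Fin n → ℕ) :
    ∑ b : Fin d → Fin t,
        (2 : ℤ) ^ (∑ j, (b j : ℕ)) * eval (fun i => (((u i).testBit (b (part i))).toNat : ℤ)) f
      = ∑ m ∈ f.support,
          f.coeff m * ((2 ^ t - 1) ^ (d - #m.support) * ∏ i ∈ m.support, ((u i : ℤ) % 2 ^ t)) := by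
  simp_rw [hf.eval_eq, mul_sum]
  rw [sum_comm]
  refine sum_congr rfl fun m hm => ?_
  simp_rw [mul_left_comm _ (f.coeff m), ← mul_sum]
  rw [sum_two_pow_mul_prod_testBit t (hf m hm).2 u, Fintype.card_fin]

theorem sum_neg_one_pow_mul_eval_homogeneousComponent (hf : IsPartite part f) (x : Fin n → ℤ) :
    ∑ ℓ ∈ range (d + 1), (-1) ^ (d - ℓ) * eval x (homogeneousComponent ℓ f)
      = ∑ m ∈ f.support, f.coeff m * ((-1) ^ (d - #m.support) * ∏ i ∈ m.support, x i) := by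
  rw [sum_range_mul_eval_homogeneousComponent hf.totalDegree_le]
  refine sum_congr rfl fun m hm => ?_
  rw [eval_monomial, Finsupp.prod_pow_eq_prod_support_of_le_one (hf m hm).1,
    Finsupp.degree_eq_card_support_of_le_one (hf m hm).1]
  ring

end IsPartite

theorem bitwise_evaluation_congruence_general (n d t : ℕ)
    (part : Fin n → Fin d) (f : MvPolynomial (Fin n) ℤ) (hf : IsPartite part f)
    (u : Fin n → ℕ) :
    (∑ b : Fin d → Fin t,
        (2 : ℤ) ^ (∑ j, (b j : ℕ)) *
          MvPolynomial.eval (fun i => (((u i).testBit (b (part i))).toNat : ℤ)) f)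
      ≡ ∑ ℓ ∈ Finset.range (d + 1),
          (-1) ^ (d - ℓ) *
            MvPolynomial.eval (fun i => (u i : ℤ))
              (MvPolynomial.homogeneousComponent ℓ f)
      [ZMOD (2 : ℤ) ^ t] := by
  rw [hf.sum_two_pow_mul_eval_testBit, hf.sum_neg_one_pow_mul_eval_homogeneousComponent]
  have hunit : (2 : ℤ) ^ t - 1 ≡ -1 [ZMOD 2 ^ t] := Int.modEq_iff_dvd.mpr ⟨-1, by ring⟩
  refine Int.ModEq.sum fun m _ => ?_
  gcongr with i
  exact Int.mod_modEq _ _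

/-- For a `d`-partite polynomial `f` over `ℤ`, `t ≥ 1`, and
`u ∈ {0,…,2^t−1}ⁿ`:
`∑_{(b₁,…,b_d) ∈ {0,…,t−1}^d} 2^{b₁+⋯+b_d} · f(bit_{b_{part(i)}}(u_i))_i
  ≡ ∑_{ℓ=0}^{d} (−1)^{d−ℓ} f_ℓ(u) (mod 2^t)`. -/
theorem bitwise_evaluation_congruence (n d t : ℕ) (ht : 1 ≤ t)
    (part : Fin n → Fin d) (f : MvPolynomial (Fin n) ℤ) (hf : IsPartite part f)
    (u : Fin n → ℕ) (hu : ∀ i, u i < 2 ^ t) :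
    (∑ b : Fin d → Fin t,
        (2 : ℤ) ^ (∑ j, (b j : ℕ)) *
          MvPolynomial.eval (fun i => (((u i).testBit (b (part i))).toNat : ℤ)) f)
      ≡ ∑ ℓ ∈ Finset.range (d + 1),
          (-1) ^ (d - ℓ) *
            MvPolynomial.eval (fun i => (u i : ℤ))
              (MvPolynomial.homogeneousComponent ℓ f)
      [ZMOD (2 : ℤ) ^ t] :=
  bitwise_evaluation_congruence_general n d t part f hf u
end

section
/- Let f be a polynomial over ℤ in n variables that is d-partite with respect to a map part : {1,…,n} → {1,…,d}, let t ≥ 1, and let g : {0,1}ⁿ → ℤ be any function such that 2^{d+2}·t^d · |{x ∈ {0,1}ⁿ : g(x) ≠ f(x)}| ≤ 2ⁿ. Fix v ∈ {0,1}ⁿ. For r ∈ {0,…,2^t−1}ⁿ and s ∈ {0,1}^d, define w_s^r ∈ {0,…,2^t−1}ⁿ by letting (w_s^r)_i be the residue of −v_i + r_i modulo 2^t if s_{part(i)} = 1, and the residue of −v_i − r_i modulo 2^t if s_{part(i)} = 0. Then the number of r ∈ {0,…,2^t−1}ⁿ for which ∑_{s ∈ {0,1}^d} ∑_{(b₁,…,b_d)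 ∈ {0,…,t−1}^d} 2^{b₁+⋯+b_d} · g( bit_{b_{part(1)}}((w_s^r)₁), …, bit_{b_{part(n)}}((w_s^r)_n) ) ≢ (−2)^d · f(v) (mod 2^t) is at most 2^{tn}/4. -/
/-!
Every monomial of a partite `f` contains at most one variable of each part, so a weighted sum,
over `b : Fin d → K`, of values of `f` at points whose `i`-th coordinate depends only on
`b (part i)` factors part by part. Modulo `2 ^ t`, binary expansion `∑ₖ 2ᵏ bitₖ(w) = w` together
with `∑ₖ 2ᵏ = 2ᵗ - 1 ≡ -1` turns the sum over the bit indices into `(-1)ᵈ f(-w_s^r)`, and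
`(v - r) + (v + r) = 2v` turns the sum over the signs into `2ᵈ f(v)`. So the weighted sum is
correct as soon as `g` answers all its `2ᵈ tᵈ` queries correctly. For fixed `(s, b)`,
`r ↦ w_s^r` is a bijection of `{0,…,2ᵗ-1}ⁿ` and every bit position is balanced, so each query
point is hit by exactly `2^{tn} / 2ⁿ` choices of `r`; a union bound over the queries finishes
the proof.
-/

open Finset MvPolynomial

theorem sum_prod_mul_prod_of_injOn {R K ι κ : Type*} [CommSemiring R] [Fintype K] [Fintype κ]
    [DecidableEq κ] {part : ι → κ} {S : Finset ι} (hS : Set.InjOn part S)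
    {c : κ → K → R} {γ : R} (hc : ∀ j, ∑ k, c j k = γ) {Y : ι → K → R} {z : ι → R}
    (hY : ∀ i ∈ S, ∑ k, c (part i) k * Y i k = γ * z i) :
    ∑ b : κ → K, (∏ j, c j (b j)) * ∏ i ∈ S, Y i (b (part i)) =
      γ ^ Fintype.card κ * ∏ i ∈ S, z i := by
  have fibre (j : κ) : ∑ k, c j k * ∏ i ∈ S with part i = j, Y i k =
      γ * ∏ i ∈ S with part i = j, z i := by
    rcases eq_empty_or_nonempty {i ∈ S | part i = j} with hempty | ⟨i, hi⟩
    · simp [hempty, hc]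
    · rw [mem_filter] at hi
      have hsingle : {i' ∈ S | part i' = j} = {i} := eq_singleton_iff_unique_mem.mpr
        ⟨mem_filter.mpr hi, fun i' hi' =>
          hS (mem_filter.mp hi').1 hi.1 ((mem_filter.mp hi').2.trans hi.2.symm)⟩
      simp only [hsingle, prod_singleton]
      rw [← hi.2]
      exact hY i hi.1
  calc ∑ b : κ → K, (∏ j, c j (b j)) * ∏ i ∈ S, Y i (b (part i))
      = ∑ b : κ → K, ∏ j, c j (b j) * ∏ i ∈ S with part i = j, Y i (b j) := by
        refine sum_congr rfl fun b _ => ?_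
        rw [prod_mul_distrib, ← prod_fiberwise S part]
        refine congrArg _ (prod_congr rfl fun j _ => prod_congr rfl fun i hi => ?_)
        rw [(mem_filter.mp hi).2]
    _ = ∏ j, ∑ k, c j k * ∏ i ∈ S with part i = j, Y i k := by
        rw [Fintype.prod_sum]
    _ = γ ^ Fintype.card κ * ∏ i ∈ S, z i := by
        rw [prod_congr rfl fun j _ => fibre j, prod_mul_distrib, prod_const, card_univ,
          prod_fiberwise]

namespace IsPartite

variable {n d : ℕ} {part : Fin n → Fin d} {f : MvPolynomial (Fin n) ℤ}

theorem aeval_eq_sum {R : Type*} [CommRing R] (hf : IsPartite part f) (x : Fin n → R) :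
    aeval x f = ∑ m ∈ f.support, ((f.coeff m : ℤ) : R) * ∏ i ∈ m.support, x i := by
  rw [aeval_def, eval₂_eq]
  refine sum_congr rfl fun m hm => ?_
  rw [eq_intCast]
  refine congrArg _ (prod_congr rfl fun i hi => ?_)
  rw [le_antisymm ((hf m hm).1 i) (Nat.one_le_iff_ne_zero.mpr (Finsupp.mem_support_iff.mp hi)),
    pow_one]

theorem sum_prod_mul_aeval {R K : Type*} [CommRing R] [Fintype K] (hf : IsPartite part f)
    {c : Fin d → K → R} {γ : R} (hc : ∀ j, ∑ k, c j k = γ) {Y : Fin n → K → R} {z : Fin n → R}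
    (hY : ∀ i, ∑ k, c (part i) k * Y i k = γ * z i) :
    ∑ b : Fin d → K, (∏ j, c j (b j)) * aeval (fun i => Y i (b (part i))) f =
      γ ^ d * aeval z f := by
  simp only [hf.aeval_eq_sum, mul_sum]
  rw [sum_comm]
  refine sum_congr rfl fun m hm => ?_
  simp only [mul_left_comm _ ((f.coeff m : ℤ) : R), ← mul_sum]
  rw [sum_prod_mul_prod_of_injOn (hf m hm).2 hc fun i _ => hY i, Fintype.card_fin]

end IsPartite

theorem MvPolynomial.intCast_eval {R : Type*} [CommRing R] {n : ℕ} (x : Fin n → ℤ)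
    (f : MvPolynomial (Fin n) ℤ) : ((eval x f : ℤ) : R) = aeval (fun i => (x i : R)) f := by
  rw [← eq_intCast (Int.castRingHom R), eval, coe_eval₂Hom, eval₂_comp_left, aeval_def]
  rfl

theorem Nat.sum_two_pow_mul_testBit {t w : ℕ} (hw : w < 2 ^ t) :
    ∑ k : Fin t, 2 ^ (k : ℕ) * (w.testBit k).toNat = w := by
  have h := finFunctionFinEquiv_apply (finFunctionFinEquiv.symm (⟨w, hw⟩ : Fin (2 ^ t)))
  rw [Equiv.apply_symm_apply] at h
  simp only [finFunctionFinEquiv_symm_apply_val] at h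
  simpa [Nat.toNat_testBit, mul_comm] using h.symm

theorem two_mul_card_filter_testBit_eq {t k : ℕ} (hk : k < t) (c : Bool) :
    2 * #{w : Fin (2 ^ t) | (w : ℕ).testBit k = c} = 2 ^ t := by
  have key := Fintype.card_filter_piFinset_const_eq_of_mem (univ : Finset (Fin 2))
    (⟨k, hk⟩ : Fin t) (mem_univ (⟨c.toNat, c.toNat_lt⟩ : Fin 2))
  rw [Fintype.piFinset_univ, card_univ, Fintype.card_fin, Fintype.card_fin] at key
  rw [card_equiv finFunctionFinEquiv.symm (t := {f | f ⟨k, hk⟩ = ⟨c.toNat, c.toNat_lt⟩}), key,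
    ← pow_succ']
  · congr 1
    omega
  · intro w
    rw [mem_filter, mem_filter, Fin.ext_iff, finFunctionFinEquiv_symm_apply_val,
      ← Nat.toNat_testBit]
    cases (w : ℕ).testBit k <;> cases c <;> simp

theorem ZMod.sum_two_pow_eq_neg_one (t : ℕ) : ∑ k : Fin t, (2 : ZMod (2 ^ t)) ^ (k : ℕ) = -1 := by
  have h := geom_sum_mul (2 : ZMod (2 ^ t)) t
  have h2 : (2 : ZMod (2 ^ t)) ^ t = 0 := by exact_mod_cast ZMod.natCast_self (2 ^ t)
  rw [h2, show (2 : ZMod (2 ^ t)) - 1 = 1 by norm_num, mul_one, zero_sub] at h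
  rw [Fin.sum_univ_eq_sum_range (fun k => (2 : ZMod (2 ^ t)) ^ k), h]

theorem Int.toNat_emod_two_pow_eq_val (t : ℕ) (x : ℤ) :
    (x % 2 ^ t).toNat = (x : ZMod (2 ^ t)).val := by
  have := ZMod.val_intCast (n := 2 ^ t) x
  push_cast at this
  omega

theorem card_filter_comp_of_injective {α : Type*} [Fintype α] {φ : α → α}
    (hφ : Function.Injective φ) (p : α → Prop) [DecidablePred p] :
    #{a | p (φ a)} = #{a | p a} :=
  card_equiv (Equiv.ofBijective φ hφ.bijective_of_finite) (by simp)

theorem card_filter_pi_apply_eq {ι α β : Type*} [Fintype ι] [DecidableEq ι] [Fintype α]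
    [DecidableEq β] (φ : ι → α → β) (x : ι → β) :
    #{r : ι → α | (fun i => φ i (r i)) = x} = ∏ i, #{a | φ i a = x i} := by
  rw [← Fintype.card_piFinset]
  congr 1
  ext r
  simp [funext_iff]

def shiftResidue (t : ℕ) (σ : Bool) (a : ℤ) (u : ℕ) : ℕ :=
  Int.toNat ((if σ then a + (u : ℤ) else a - (u : ℤ)) % 2 ^ t)

section ShiftResidue

variable {t : ℕ}

theorem shiftResidue_lt (σ : Bool) (a : ℤ) (u : ℕ) : shiftResidue t σ a u < 2 ^ t := by
  rw [shiftResidue, Int.toNat_emod_two_pow_eq_val]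
  exact ZMod.val_lt _

theorem natCast_shiftResidue (σ : Bool) (a : ℤ) (u : ℕ) :
    (shiftResidue t σ a u : ZMod (2 ^ t)) = if σ then (a : ZMod (2 ^ t)) + u else a - u := by
  rw [shiftResidue, Int.toNat_emod_two_pow_eq_val, ZMod.natCast_zmod_val]
  split_ifs <;> push_cast <;> rfl

theorem shiftResidue_injective (σ : Bool) (a : ℤ) :
    Function.Injective fun u : Fin (2 ^ t) => shiftResidue t σ a u := by
  intro u u' h
  have hcast := congrArg (Nat.cast : ℕ → ZMod (2 ^ t)) h
  simp only [natCast_shiftResidue] at hcast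
  have hu : ((u : ℕ) : ZMod (2 ^ t)) = (u' : ℕ) := by
    cases σ <;> simpa using hcast
  simpa [ZMod.val_cast_of_lt u.isLt, ZMod.val_cast_of_lt u'.isLt, Fin.ext_iff]
    using congrArg ZMod.val hu

theorem two_mul_card_filter_testBit_shiftResidue {k : ℕ} (hk : k < t) (σ : Bool) (a : ℤ)
    (c : Bool) : 2 * #{u : Fin (2 ^ t) | (shiftResidue t σ a u).testBit k = c} = 2 ^ t := by
  let φ (u : Fin (2 ^ t)) : Fin (2 ^ t) := ⟨shiftResidue t σ a u, shiftResidue_lt σ a u⟩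
  have hφ : Function.Injective φ := fun u u' h =>
    shiftResidue_injective σ a (congrArg Fin.val h)
  exact (congrArg (2 * ·) (card_filter_comp_of_injective hφ fun w => (w : ℕ).testBit k = c)).trans
    (two_mul_card_filter_testBit_eq hk c)

end ShiftResidue

section SelfCorrection

variable {n d t : ℕ} (part : Fin n → Fin d) (v : Fin n → Bool)

-- `shiftResidue t (s (part i)) (-vᵢ) (r i)` is the coordinate `(w_s^r)ᵢ` of the paper.
def selfCorrectionQuery (r : Fin n → Fin (2 ^ t)) (s : Fin d → Bool) (b : Fin d → Fin t) :
    Fin n → Bool :=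
  fun i => (shiftResidue t (s (part i)) (-((v i).toNat : ℤ)) (r i)).testBit (b (part i))

def selfCorrectionSum (g : (Fin n → Bool) → ℤ) (r : Fin n → Fin (2 ^ t)) : ℤ :=
  ∑ s : Fin d → Bool, ∑ b : Fin d → Fin t,
    (2 : ℤ) ^ (∑ j, (b j : ℕ)) * g (selfCorrectionQuery part v r s b)

variable {part v}

theorem selfCorrectionSum_modEq {f : MvPolynomial (Fin n) ℤ} (hf : IsPartite part f)
    {g : (Fin n → Bool) → ℤ} {r : Fin n → Fin (2 ^ t)}
    (hg : ∀ s b, g (selfCorrectionQuery part v r s b) =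
      eval (fun i => ((selfCorrectionQuery part v r s b i).toNat : ℤ)) f) :
    selfCorrectionSum part v g r ≡ (-2) ^ d * eval (fun i => ((v i).toNat : ℤ)) f
      [ZMOD 2 ^ t] := by
  suffices h : (selfCorrectionSum part v g r : ZMod (2 ^ t)) =
      (((-2) ^ d * eval (fun i => ((v i).toNat : ℤ)) f : ℤ) : ZMod (2 ^ t)) by
    exact_mod_cast (ZMod.intCast_eq_intCast_iff _ _ _).mp h
  let w (s : Fin d → Bool) (i : Fin n) : ℕ := shiftResidue t (s (part i)) (-((v i).toNat : ℤ)) (r i)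
  have sum_bits (s : Fin d → Bool) :
      ∑ b : Fin d → Fin t, (∏ j, (2 : ZMod (2 ^ t)) ^ (b j : ℕ)) *
          aeval (fun i => (((selfCorrectionQuery part v r s b i).toNat : ℕ) : ZMod (2 ^ t))) f =
        (-1) ^ d * aeval (fun i => -(w s i : ZMod (2 ^ t))) f :=
    hf.sum_prod_mul_aeval (c := fun _ (k : Fin t) => (2 : ZMod (2 ^ t)) ^ (k : ℕ))
      (Y := fun i (k : Fin t) => (((w s i).testBit k).toNat : ZMod (2 ^ t)))
      (fun _ => ZMod.sum_two_pow_eq_neg_one t)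
      (fun i => by
        rw [neg_one_mul, neg_neg]
        simpa using congrArg (Nat.cast : ℕ → ZMod (2 ^ t))
          (Nat.sum_two_pow_mul_testBit (w := w s i) (shiftResidue_lt _ _ _)))
  have sum_signs := hf.sum_prod_mul_aeval (K := Bool) (c := fun _ _ => 1) (γ := 2)
    (Y := fun i σ => -(shiftResidue t σ (-((v i).toNat : ℤ)) (r i) : ZMod (2 ^ t)))
    (z := fun i => ((v i).toNat : ZMod (2 ^ t))) (fun _ => by simp [one_add_one_eq_two])
    (fun _ => by simp [natCast_shiftResidue, two_mul])
  simp only [prod_const_one, one_mul] at sum_signs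
  calc (selfCorrectionSum part v g r : ZMod (2 ^ t))
      = ∑ s : Fin d → Bool, ∑ b : Fin d → Fin t, (∏ j, (2 : ZMod (2 ^ t)) ^ (b j : ℕ)) *
          aeval (fun i => (((selfCorrectionQuery part v r s b i).toNat : ℕ) : ZMod (2 ^ t))) f := by
        simp [selfCorrectionSum, hg, MvPolynomial.intCast_eval, prod_pow_eq_pow_sum]
    _ = (-1) ^ d * ∑ s : Fin d → Bool, aeval (fun i => -(w s i : ZMod (2 ^ t))) f := by
        rw [mul_sum]
        exact sum_congr rfl fun s _ => sum_bits s
    _ = _ := by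
        rw [sum_signs]
        push_cast [MvPolynomial.intCast_eval]
        rw [← mul_assoc, ← mul_pow, neg_one_mul]

variable (part v)

theorem two_pow_mul_card_filter_selfCorrectionQuery_eq (s : Fin d → Bool) (b : Fin d → Fin t)
    (x : Fin n → Bool) :
    2 ^ n * #{r : Fin n → Fin (2 ^ t) | selfCorrectionQuery part v r s b = x} = 2 ^ (t * n) := by
  calc 2 ^ n * #{r : Fin n → Fin (2 ^ t) | selfCorrectionQuery part v r s b = x}
      = ∏ i : Fin n, 2 * #{u : Fin (2 ^ t) |
          (shiftResidue t (s (part i)) (-((v i).toNat : ℤ)) u).testBit (b (part i)) = x i} := by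
        rw [prod_mul_distrib, Fin.prod_const, ← card_filter_pi_apply_eq]
        rfl
    _ = 2 ^ (t * n) := by
        rw [prod_congr rfl fun i _ =>
            two_mul_card_filter_testBit_shiftResidue (b (part i)).isLt _ _ _,
          Fin.prod_const, pow_mul]

theorem two_pow_mul_card_filter_selfCorrectionQuery_mem (s : Fin d → Bool) (b : Fin d → Fin t)
    (B : Finset (Fin n → Bool)) :
    2 ^ n * #{r : Fin n → Fin (2 ^ t) | selfCorrectionQuery part v r s b ∈ B} =
      #B * 2 ^ (t * n) := by
  rw [card_eq_sum_card_fiberwise (f := fun r => selfCorrectionQuery part v r s b) (t := B)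
    (s := {r | selfCorrectionQuery part v r s b ∈ B}) (fun r hr => (mem_filter.mp hr).2),
    mul_sum, ← smul_eq_mul, ← sum_const]
  refine sum_congr rfl fun x hx => ?_
  rw [filter_filter, ← two_pow_mul_card_filter_selfCorrectionQuery_eq part v s b x]
  congr 2
  exact filter_congr fun r _ => ⟨And.right, fun h => ⟨h ▸ hx, h⟩⟩

end SelfCorrection

theorem integer_self_correction_general (n d t : ℕ)
    (part : Fin n → Fin d) (f : MvPolynomial (Fin n) ℤ) (hf : IsPartite part f)
    (g : (Fin n → Bool) → ℤ)
    (hg : 2 ^ (d + 2) * t ^ d *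
        (Finset.univ.filter (fun x : Fin n → Bool =>
            g x ≠ MvPolynomial.eval (fun i => ((x i).toNat : ℤ)) f)).card
        ≤ 2 ^ n)
    (v : Fin n → Bool) :
    4 * (Finset.univ.filter (fun r : Fin n → Fin (2 ^ t) =>
        ¬ ((∑ s : Fin d → Bool,
              ∑ b : Fin d → Fin t,
                (2 : ℤ) ^ (∑ j, (b j : ℕ)) *
                  g (fun i =>
                      Nat.testBit
                        (Int.toNat
                          ((if s (part i) then
                              -((v i).toNat : ℤ) + ((r i : ℕ) : ℤ)
                            else
                              -((v i).toNat : ℤ) - ((r i : ℕ) : ℤ)) % 2 ^ t))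
                        (b (part i))))
            ≡ (-2) ^ d * MvPolynomial.eval (fun i => ((v i).toNat : ℤ)) f
            [ZMOD (2 : ℤ) ^ t]))).card
      ≤ 2 ^ (t * n) := by
  set B : Finset (Fin n → Bool) := {x | g x ≠ eval (fun i => ((x i).toNat : ℤ)) f} with hB
  set bad : Finset (Fin n → Fin (2 ^ t)) := {r |
    ¬ selfCorrectionSum part v g r ≡ (-2) ^ d * eval (fun i => ((v i).toNat : ℤ)) f [ZMOD 2 ^ t]}
  change 4 * #bad ≤ 2 ^ (t * n)
  have hbad : bad ⊆ (univ : Finset ((Fin d → Bool) × (Fin d → Fin t))).biUnion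
      fun p => {r | selfCorrectionQuery part v r p.1 p.2 ∈ B} := by
    intro r hr
    simp only [bad, mem_filter, mem_univ, true_and, mem_biUnion] at hr ⊢
    by_contra! hgood
    exact hr (selfCorrectionSum_modEq hf fun s b => by simpa [hB] using hgood (s, b))
  have hunion : 2 ^ n * #bad ≤ 2 ^ d * t ^ d * (#B * 2 ^ (t * n)) := calc
    2 ^ n * #bad ≤ ∑ p : (Fin d → Bool) × (Fin d → Fin t),
        2 ^ n * #{r : Fin n → Fin (2 ^ t) | selfCorrectionQuery part v r p.1 p.2 ∈ B} := by
      rw [← mul_sum]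
      exact Nat.mul_le_mul_left _ ((card_le_card hbad).trans card_biUnion_le)
    _ = 2 ^ d * t ^ d * (#B * 2 ^ (t * n)) := by
      simp [two_pow_mul_card_filter_selfCorrectionQuery_mem]
  refine le_of_mul_le_mul_left (a := 2 ^ n) ?_ (by positivity)
  calc 2 ^ n * (4 * #bad) = 4 * (2 ^ n * #bad) := by ring
    _ ≤ 4 * (2 ^ d * t ^ d * (#B * 2 ^ (t * n))) := Nat.mul_le_mul_left _ hunion
    _ = 2 ^ (d + 2) * t ^ d * #B * 2 ^ (t * n) := by ring
    _ ≤ 2 ^ n * 2 ^ (t * n) := Nat.mul_le_mul_right _ hg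

/-- Deterministic-query form of Theorem 3.2: for `d`-partite `f` over `ℤ`,
`t ≥ 1`, and any `g : {0,1}ⁿ → ℤ` with
`2^{d+2}·t^d·|{x : g(x) ≠ f(x)}| ≤ 2ⁿ`, for every `v ∈ {0,1}ⁿ` the number of
`r ∈ {0,…,2^t−1}ⁿ` on which the weighted bit-level sum of `g`-values fails to be congruent
to `(−2)^d f(v)` modulo `2^t` is at most `2^{tn}/4`. -/
theorem integer_self_correction (n d t : ℕ) (ht : 1 ≤ t)
    (part : Fin n → Fin d) (f : MvPolynomial (Fin n) ℤ) (hf : IsPartite part f)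
    (g : (Fin n → Bool) → ℤ)
    (hg : 2 ^ (d + 2) * t ^ d *
        (Finset.univ.filter (fun x : Fin n → Bool =>
            g x ≠ MvPolynomial.eval (fun i => ((x i).toNat : ℤ)) f)).card
        ≤ 2 ^ n)
    (v : Fin n → Bool) :
    4 * (Finset.univ.filter (fun r : Fin n → Fin (2 ^ t) =>
        ¬ ((∑ s : Fin d → Bool,
              ∑ b : Fin d → Fin t,
                (2 : ℤ) ^ (∑ j, (b j : ℕ)) *
                  g (fun i =>
                      Nat.testBit
                        (Int.toNat
                          ((if s (part i) then
                              -((v i).toNat : ℤ) + ((r i : ℕ) : ℤ)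
                            else
                              -((v i).toNat : ℤ) - ((r i : ℕ) : ℤ)) % 2 ^ t))
                        (b (part i))))
            ≡ (-2) ^ d * MvPolynomial.eval (fun i => ((v i).toNat : ℤ)) f
            [ZMOD (2 : ℤ) ^ t]))).card
      ≤ 2 ^ (t * n) :=
  integer_self_correction_general n d t part f hf g hg v
end

section
/- Let c and j be natural numbers with c ≥ 1, j ≥ 1, and 2^{j−1} ≤ c ≤ 2^{j+1}. Then, as real numbers, c · 2^{−j} · (1 − 2^{−j})^{c−1} ≥ 1/32. -/
/-!
Write `2 ^ j = 2 * n` with `n = 2 ^ (j - 1) ≤ c`. Then `c / 2 ^ j ≥ 1 / 2`, and since `c - 1 ≤ 4 * n`,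
Bernoulli's inequality `(1 - 1 / (2 * n)) ^ n ≥ 1 / 2` gives
`(1 - 2 ^ (-j)) ^ (c - 1) ≥ ((1 - 1 / (2 * n)) ^ n) ^ 4 ≥ 1 / 16`.
-/

theorem one_sixteenth_le_one_sub_inv_two_mul_pow {K : Type*} [Field K] [LinearOrder K]
    [IsStrictOrderedRing K] (n : ℕ) : (1 / 16 : K) ≤ (1 - (2 * n : K)⁻¹) ^ (4 * n) := by
  rcases n.eq_zero_or_pos with rfl | hn
  · norm_num
  have bernoulli : (1 / 2 : K) ≤ (1 - (2 * n : K)⁻¹) ^ n := by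
    have hp : (2 * n : K)⁻¹ ≤ 2 := by
      rw [inv_le_iff_one_le_mul₀ (by positivity)]
      nlinarith [show (1 : K) ≤ n by exact_mod_cast hn]
    calc (1 / 2 : K) = 1 + n * -(2 * n : K)⁻¹ := by field_simp; ring
      _ ≤ (1 + -(2 * n : K)⁻¹) ^ n := one_add_mul_le_pow (by linarith) n
      _ = (1 - (2 * n : K)⁻¹) ^ n := by rw [← sub_eq_add_neg]
  calc (1 / 16 : K) = (1 / 2) ^ 4 := by norm_num
    _ ≤ ((1 - (2 * n : K)⁻¹) ^ n) ^ 4 := pow_le_pow_left₀ (by norm_num) bernoulli 4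
    _ = (1 - (2 * n : K)⁻¹) ^ (4 * n) := by rw [mul_comm 4 n, pow_mul]

theorem subsampling_single_survivor_general (c j : ℕ) (hj : 1 ≤ j)
    (h1 : 2 ^ (j - 1) ≤ c) (h2 : c ≤ 2 ^ (j + 1)) :
    (1 : ℝ) / 32 ≤ (c : ℝ) * ((2 : ℝ) ^ j)⁻¹ * (1 - ((2 : ℝ) ^ j)⁻¹) ^ (c - 1) := by
  obtain ⟨m, rfl⟩ : ∃ m, j = m + 1 := ⟨j - 1, by omega⟩
  set n := 2 ^ m with hn
  rw [Nat.add_sub_cancel] at h1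
  have hc4 : c - 1 ≤ 4 * n := by rw [pow_succ, pow_succ] at h2; omega
  have two_pow_eq : (2 : ℝ) ^ (m + 1) = 2 * (n : ℝ) := by rw [hn]; push_cast; ring
  rw [two_pow_eq]
  have hp1 : (2 * (n : ℝ))⁻¹ ≤ 1 :=
    inv_le_one_of_one_le₀ (by norm_cast; have := Nat.one_le_two_pow (n := m); omega)
  have half_le : (1 / 2 : ℝ) ≤ c * (2 * (n : ℝ))⁻¹ := by
    rw [← div_eq_mul_inv, le_div_iff₀ (by positivity)]
    have : (n : ℝ) ≤ c := by exact_mod_cast h1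
    linarith
  have sixteenth_le : (1 / 16 : ℝ) ≤ (1 - (2 * (n : ℝ))⁻¹) ^ (c - 1) :=
    (one_sixteenth_le_one_sub_inv_two_mul_pow n).trans
      (pow_le_pow_of_le_one (sub_nonneg.2 hp1) (sub_le_self _ (by positivity)) hc4)
  calc (1 / 32 : ℝ) = 1 / 2 * (1 / 16) := by norm_num
    _ ≤ _ := mul_le_mul half_le sixteenth_le (by norm_num) (by positivity)

/-- If `c ≥ 1`, `j ≥ 1`, and `2^{j−1} ≤ c ≤ 2^{j+1}`, then
`c · 2^{−j} · (1 − 2^{−j})^{c−1} ≥ 1/32` as real numbers. -/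
theorem subsampling_single_survivor (c j : ℕ) (hc : 1 ≤ c) (hj : 1 ≤ j)
    (h1 : 2 ^ (j - 1) ≤ c) (h2 : c ≤ 2 ^ (j + 1)) :
    (1 : ℝ) / 32 ≤ (c : ℝ) * ((2 : ℝ) ^ j)⁻¹ * (1 - ((2 : ℝ) ^ j)⁻¹) ^ (c - 1) :=
  subsampling_single_survivor_general c j hj h1 h2
end

section
/- Let k, b, c be natural numbers and let s₁, …, s_k : {0, …, b−1} → {0,1} be bit strings such that for every position m < b the column sum ∑_{i=1}^{k} s_i(m) is strictly less than 2^c. Define pad(s_i) = ∑_{m=0}^{b−1} s_i(m) · 2^{c·m} and x = ∑_{i=1}^{k} pad(s_i). Then for every m < b, the m-th base-2^c digit of x satisfies ⌊x / 2^{c·m}⌋ mod 2^c = ∑_{i=1}^{k} s_i(m). -/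
/-!
Exchanging the two sums writes `x` in base `2 ^ c` with the column sums as digits. Since every
column sum is below `2 ^ c`, this is a genuine base-`2 ^ c` expansion, and its `m`-th digit is
read off by dividing by `(2 ^ c) ^ m` and reducing mod `2 ^ c`.
-/

namespace Nat

theorem ofDigits_ofFn (B : ℕ) {n : ℕ} (a : Fin n → ℕ) :
    ofDigits B (List.ofFn a) = ∑ j, a j * B ^ (j : ℕ) := by
  induction n with
  | zero => simp
  | succ n ih =>
    rw [List.ofFn_succ, ofDigits_cons, ih, Fin.sum_univ_succ, Finset.mul_sum]
    simp only [Fin.val_zero, pow_zero, mul_one, Fin.val_succ, pow_succ]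
    congr 1
    exact Finset.sum_congr rfl fun j _ => by ring

theorem ofDigits_div_pow_mod {B : ℕ} (L : List ℕ) (hL : ∀ d ∈ L, d < B) {m : ℕ}
    (hm : m < L.length) : ofDigits B L / B ^ m % B = L[m] := by
  have hB : 0 < B := zero_lt_of_lt (hL _ (L.getElem_mem hm))
  rw [ofDigits_div_pow_eq_ofDigits_drop m hB L hL, ofDigits_mod_eq_head!,
    List.drop_eq_getElem_cons hm, List.head!_cons, mod_eq_of_lt (hL _ (L.getElem_mem hm))]

theorem sum_mul_pow_div_pow_mod {B n : ℕ} (a : Fin n → ℕ) (ha : ∀ j, a j < B) (m : Fin n) :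
    (∑ j, a j * B ^ (j : ℕ)) / B ^ (m : ℕ) % B = a m := by
  rw [← ofDigits_ofFn, ofDigits_div_pow_mod _ (by simpa using ha) (by simp), List.getElem_ofFn]

end Nat

/-- Padding gadget: if every column sum `∑_{i} s_i(m)` is less than `2^c`,
then with `pad(s_i) = ∑_{m} s_i(m)·2^{c·m}` and `x = ∑_i pad(s_i)`, the `m`-th base-`2^c`
digit of `x` equals the column sum `∑_i s_i(m)`. -/
theorem padding_no_carries (k b c : ℕ) (s : Fin k → Fin b → Bool)
    (hcol : ∀ m : Fin b, (∑ i, (s i m).toNat) < 2 ^ c) :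
    ∀ m : Fin b,
      ((∑ i, ∑ m' : Fin b, (s i m').toNat * 2 ^ (c * (m' : ℕ))) / 2 ^ (c * (m : ℕ)))
          % 2 ^ c
        = ∑ i, (s i m).toNat := by
  intro m
  have hx : ∑ i, ∑ m' : Fin b, (s i m').toNat * 2 ^ (c * (m' : ℕ))
      = ∑ m' : Fin b, (∑ i, (s i m').toNat) * (2 ^ c) ^ (m' : ℕ) := by
    simp only [Finset.sum_comm (γ := Fin k), Finset.sum_mul, pow_mul]
  rw [hx, pow_mul]
  exact Nat.sum_mul_pow_div_pow_mod _ hcol m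
end
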